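/- arXiv:2212.01419 — 3 statements merged into one kernel-verified Lean document; each statement's English description precedes it below -/
import Mathlib

section
/- Let δ : Ω × [0,1] → {0,1} be a jointly measurable indicator process, and let λ : [0,1] → ℝ be continuously differentiable with 0 < λ₀ ≤ λ(t) ≤ Λ and |λ′(t)| ≤ L for all t. Suppose for some p > 2 that E[ (∫₀¹ δ(·,v) dv)^{-p} ] < ∞ and that there is a constant C > 0 with P(δ(·,s) ≠ δ(·,t)) ≤ C|s − t|^p for all s, t ∈ [0,1]. Define λ*(t) = E[ δ(·,t) λ(t) / ∫₀¹ δ(·,v) λ(v) dv ]. Then for every t ∈ (0,1), λ* is differentiable at t with derivative (λ*)′(t) = E[ δ(·,t) λ′(t) / ∫₀¹ δ(·,v) λ(v) dv ], and this derivative is bounded in absolute value by (L/λ₀) · E[ (∫₀¹ δ(·,v) dv)^{-1} ]. -/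
/-!
Write `D = ∫₀¹ δ λ` and `F t = E[δ(·,t) / D]`, so that `λ* = λ F` and the claimed derivative is
`λ' F`. The variables `δ(·,t₁)/D` and `δ(·,t₂)/D` differ only on `{δ(·,t₁) ≠ δ(·,t₂)}`, and there by
at most `1 / (λ₀ ∫₀¹ δ)`. Splitting `x⁻¹ ≤ ε⁻¹ + ε^(p-1) x^(-p)` at `ε = |t₁ - t₂|`, the Hölder-type
condition and the moment of order `-p` give `|F t₁ - F t₂| = O(|t₁ - t₂|^(p-1))`. Since `p - 1 > 1`,
`F` has derivative `0`, and the product rule gives `(λ*)' = λ' F`; the bound follows from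
`|λ'| ≤ L` and `|δ/D| ≤ 1 / (λ₀ ∫₀¹ δ)`.
-/

open MeasureTheory Filter Topology Set

theorem inv_le_inv_add_rpow_mul_rpow_neg {x ε q : ℝ} (hx : 0 ≤ x) (hε : 0 < ε) (hq : 1 ≤ q) :
    x⁻¹ ≤ ε⁻¹ + ε ^ (q - 1) * x ^ (-q) := by
  rcases le_or_gt ε x with hεx | hxε
  · exact (inv_anti₀ hε hεx).trans (le_add_of_nonneg_right (by positivity))
  · rcases hx.eq_or_lt with rfl | hx
    · rw [inv_zero]; positivity
    · calc x⁻¹ = x ^ (q - 1) * x ^ (-q) := by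
            rw [← Real.rpow_add hx, ← Real.rpow_neg_one]; ring_nf
        _ ≤ ε ^ (q - 1) * x ^ (-q) := by gcongr
        _ ≤ ε⁻¹ + ε ^ (q - 1) * x ^ (-q) := le_add_of_nonneg_left (by positivity)

theorem hasDerivAt_zero_of_abs_sub_le_rpow {f : ℝ → ℝ} {x K r : ℝ} (hr : 1 < r)
    (hf : ∀ᶠ y in 𝓝 x, |f y - f x| ≤ K * |y - x| ^ r) : HasDerivAt f 0 x := by
  have hsmall : (fun y => |y - x| ^ (r - 1)) =o[𝓝 x] (fun _ => (1 : ℝ)) := by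
    rw [Asymptotics.isLittleO_one_iff]
    have hcont : Continuous fun y => |y - x| ^ (r - 1) :=
      (continuous_abs.comp (continuous_sub_right x)).rpow_const fun _ => Or.inr (by linarith)
    simpa [Real.zero_rpow (by linarith : r - 1 ≠ 0)] using hcont.tendsto x
  have hpow : (fun y => |y - x| ^ r) =o[𝓝 x] (fun y => y - x) := by
    refine (hsmall.mul_isBigO (Asymptotics.isBigO_refl (fun y => y - x) _).norm_left).congr'
      (Eventually.of_forall fun y => ?_) (Eventually.of_forall fun y => one_mul _)
    rcases eq_or_ne y x with rfl | hyx
    · simp [Real.zero_rpow (by linarith : r ≠ 0)]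
    · dsimp only
      rw [Real.norm_eq_abs, ← Real.rpow_add_one (abs_pos.2 (sub_ne_zero.2 hyx)).ne', sub_add_cancel]
  rw [hasDerivAt_iff_isLittleO]
  have hbig : (fun y => f y - f x) =O[𝓝 x] (fun y => |y - x| ^ r) :=
    .of_bound K <| hf.mono fun y hy => by
      rwa [Real.norm_eq_abs, Real.norm_eq_abs, abs_of_nonneg (by positivity : (0:ℝ) ≤ |y - x| ^ r)]
  simpa using hbig.trans_isLittleO hpow

theorem abs_div_le_inv_mul_inv {a I D c C : ℝ} (hc : 0 < c) (hI : 0 ≤ I) (hcI : c * I ≤ D)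
    (hDI : D ≤ C * I) (ha : |a| ≤ 1) : |a / D| ≤ c⁻¹ * I⁻¹ := by
  rcases hI.eq_or_lt with rfl | hI
  -- `D ≤ C * I` forces `D = 0`, and both sides vanish by the convention `x / 0 = 0`.
  · have hD : D = 0 := le_antisymm (by simpa using hDI) (by simpa using hcI)
    simp [hD]
  · have hD : 0 < D := (mul_pos hc hI).trans_le hcI
    rw [abs_div, abs_of_pos hD, ← mul_inv]
    calc |a| / D ≤ 1 / D := by gcongr
      _ ≤ 1 / (c * I) := by gcongr
      _ = (c * I)⁻¹ := one_div _

section WeightedIntegral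
variable {α : Type*} [MeasurableSpace α] {ν : Measure α} {s : Set α} {f g : α → ℝ} {c : ℝ}

theorem mul_setIntegral_le_setIntegral_mul (hs : MeasurableSet s) (hf : IntegrableOn f s ν)
    (hfg : IntegrableOn (fun v => f v * g v) s ν) (hf0 : ∀ v ∈ s, 0 ≤ f v)
    (hg : ∀ v ∈ s, c ≤ g v) : c * ∫ v in s, f v ∂ν ≤ ∫ v in s, f v * g v ∂ν := by
  rw [← integral_const_mul]
  refine setIntegral_mono_on (hf.const_mul c) hfg hs fun v hv => ?_
  rw [mul_comm]
  exact mul_le_mul_of_nonneg_left (hg v hv) (hf0 v hv)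

theorem setIntegral_mul_le_mul_setIntegral (hs : MeasurableSet s) (hf : IntegrableOn f s ν)
    (hfg : IntegrableOn (fun v => f v * g v) s ν) (hf0 : ∀ v ∈ s, 0 ≤ f v)
    (hg : ∀ v ∈ s, g v ≤ c) : ∫ v in s, f v * g v ∂ν ≤ c * ∫ v in s, f v ∂ν := by
  rw [← integral_const_mul]
  refine setIntegral_mono_on hfg (hf.const_mul c) hs fun v hv => ?_
  rw [mul_comm c]
  exact mul_le_mul_of_nonneg_left (hg v hv) (hf0 v hv)

end WeightedIntegral

section Path
variable {s : Set ℝ} {δ lam : ℝ → ℝ} {lam₀ Λ : ℝ}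

theorem integrableOn_of_eq_zero_or_eq_one (hs : IsCompact s) (hδ : Measurable δ)
    (h01 : ∀ t ∈ s, δ t = 0 ∨ δ t = 1) : IntegrableOn δ s :=
  Measure.integrableOn_of_bounded (M := 1) hs.measure_lt_top.ne hδ.aestronglyMeasurable <|
    (ae_restrict_iff' hs.measurableSet).2 <| ae_of_all _ fun t ht => by
      rcases h01 t ht with h | h <;> simp [h]

theorem setIntegral_nonneg_of_eq_zero_or_eq_one (hs : MeasurableSet s)
    (h01 : ∀ t ∈ s, δ t = 0 ∨ δ t = 1) : 0 ≤ ∫ v in s, δ v :=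
  setIntegral_nonneg hs fun t ht => by rcases h01 t ht with h | h <;> simp [h]

theorem abs_div_setIntegral_mul_le (hs : IsCompact s) (hδ : Measurable δ)
    (h01 : ∀ t ∈ s, δ t = 0 ∨ δ t = 1) (hlamc : ContinuousOn lam s) (hlam₀ : 0 < lam₀)
    (hlam : ∀ t ∈ s, lam₀ ≤ lam t ∧ lam t ≤ Λ) {a : ℝ} (ha : |a| ≤ 1) :
    |a / ∫ v in s, δ v * lam v| ≤ lam₀⁻¹ * (∫ v in s, δ v)⁻¹ := by
  have hδs := integrableOn_of_eq_zero_or_eq_one hs hδ h01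
  have hδlam := hδs.mul_continuousOn hlamc hs
  have hδ0 : ∀ t ∈ s, 0 ≤ δ t := fun t ht => by rcases h01 t ht with h | h <;> simp [h]
  exact abs_div_le_inv_mul_inv hlam₀
    (setIntegral_nonneg_of_eq_zero_or_eq_one hs.measurableSet h01)
    (mul_setIntegral_le_setIntegral_mul hs.measurableSet hδs hδlam hδ0 fun t ht => (hlam t ht).1)
    (setIntegral_mul_le_mul_setIntegral hs.measurableSet hδs hδlam hδ0 fun t ht => (hlam t ht).2) ha

theorem abs_apply_div_setIntegral_mul_le (hs : IsCompact s) (hδ : Measurable δ)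
    (h01 : ∀ t ∈ s, δ t = 0 ∨ δ t = 1) (hlamc : ContinuousOn lam s) (hlam₀ : 0 < lam₀)
    (hlam : ∀ t ∈ s, lam₀ ≤ lam t ∧ lam t ≤ Λ) {t : ℝ} (ht : t ∈ s) :
    |δ t / ∫ v in s, δ v * lam v| ≤ lam₀⁻¹ * (∫ v in s, δ v)⁻¹ :=
  abs_div_setIntegral_mul_le hs hδ h01 hlamc hlam₀ hlam <| by rcases h01 t ht with h | h <;> simp [h]

end Path

section Moment
variable {Ω : Type*} [MeasurableSpace Ω] {μ : Measure Ω} [IsFiniteMeasure μ] {Z : Ω → ℝ} {p : ℝ}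

theorem integrable_inv_of_integrable_rpow_neg (hZ : 0 ≤ Z) (hZm : AEMeasurable Z μ) (hp : 1 ≤ p)
    (hZp : Integrable (fun ω => Z ω ^ (-p)) μ) : Integrable (fun ω => (Z ω)⁻¹) μ :=
  ((integrable_const 1).add hZp).mono' hZm.inv.aestronglyMeasurable <| ae_of_all _ fun ω => by
    rw [Real.norm_eq_abs, abs_of_nonneg (inv_nonneg.2 (hZ ω))]
    simpa using inv_le_inv_add_rpow_mul_rpow_neg (hZ ω) one_pos hp

theorem setIntegral_inv_le_of_measureReal_le (hZ : 0 ≤ Z) (hp : 1 ≤ p)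
    (hZp : Integrable (fun ω => Z ω ^ (-p)) μ) {A : Set Ω} {C ε : ℝ} (hε : 0 < ε)
    (hA : μ.real A ≤ C * ε ^ p) :
    ∫ ω in A, (Z ω)⁻¹ ∂μ ≤ (C + ∫ ω, Z ω ^ (-p) ∂μ) * ε ^ (p - 1) := by
  have hsplit : ∫ ω in A, (Z ω)⁻¹ ∂μ ≤ ∫ ω in A, (ε⁻¹ + ε ^ (p - 1) * Z ω ^ (-p)) ∂μ :=
    integral_mono_of_nonneg (ae_of_all _ fun ω => inv_nonneg.2 (hZ ω))
      ((integrable_const _).add (hZp.const_mul _)).integrableOn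
      (ae_of_all _ fun ω => inv_le_inv_add_rpow_mul_rpow_neg (hZ ω) hε hp)
  rw [integral_add (integrable_const _).integrableOn (hZp.const_mul _).integrableOn,
    setIntegral_const, integral_const_mul, smul_eq_mul] at hsplit
  have htail : ∫ ω in A, Z ω ^ (-p) ∂μ ≤ ∫ ω, Z ω ^ (-p) ∂μ :=
    setIntegral_le_integral hZp (ae_of_all _ fun ω => Real.rpow_nonneg (hZ ω) _)
  calc ∫ ω in A, (Z ω)⁻¹ ∂μ ≤ μ.real A * ε⁻¹ + ε ^ (p - 1) * ∫ ω in A, Z ω ^ (-p) ∂μ := hsplit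
    _ ≤ C * ε ^ p * ε⁻¹ + ε ^ (p - 1) * ∫ ω, Z ω ^ (-p) ∂μ := by gcongr
    _ = (C + ∫ ω, Z ω ^ (-p) ∂μ) * ε ^ (p - 1) := by
      rw [Real.rpow_sub_one hε.ne', div_eq_mul_inv]; ring

end Moment

section Expectation
variable {Ω : Type*} [MeasurableSpace Ω] {μ : Measure Ω} {δ : Ω → ℝ → ℝ} {s : Set ℝ}
  {lam : ℝ → ℝ} {lam₀ Λ p : ℝ}

theorem aestronglyMeasurable_setIntegral_mul (hδ : Measurable fun q : Ω × ℝ => δ q.1 q.2)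
    (hs : MeasurableSet s) (hlamc : ContinuousOn lam s) :
    AEStronglyMeasurable (fun ω => ∫ v in s, δ ω v * lam v) μ :=
  AEStronglyMeasurable.integral_prod_right' (f := fun q : Ω × ℝ => δ q.1 q.2 * lam q.2)
    (hδ.aestronglyMeasurable.mul (hlamc.aestronglyMeasurable hs).comp_snd)

theorem integrable_inv_setIntegral [IsFiniteMeasure μ]
    (hδ : Measurable fun q : Ω × ℝ => δ q.1 q.2) (hs : MeasurableSet s)
    (h01 : ∀ ω, ∀ t ∈ s, δ ω t = 0 ∨ δ ω t = 1) (hp : 1 ≤ p)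
    (hrecip : Integrable (fun ω => (∫ v in s, δ ω v) ^ (-p)) μ) :
    Integrable (fun ω => (∫ v in s, δ ω v)⁻¹) μ :=
  integrable_inv_of_integrable_rpow_neg
    (fun ω => setIntegral_nonneg_of_eq_zero_or_eq_one hs (h01 ω))
    (hδ.stronglyMeasurable.integral_prod_right' (ν := volume.restrict s)).measurable.aemeasurable
    hp hrecip

theorem integrable_div_setIntegral_mul (hδ : Measurable fun q : Ω × ℝ => δ q.1 q.2)
    (hs : IsCompact s) (h01 : ∀ ω, ∀ t ∈ s, δ ω t = 0 ∨ δ ω t = 1) (hlamc : ContinuousOn lam s)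
    (hlam₀ : 0 < lam₀) (hlam : ∀ t ∈ s, lam₀ ≤ lam t ∧ lam t ≤ Λ)
    (hI : Integrable (fun ω => (∫ v in s, δ ω v)⁻¹) μ) {t : ℝ} (ht : t ∈ s) :
    Integrable (fun ω => δ ω t / ∫ v in s, δ ω v * lam v) μ :=
  (hI.const_mul lam₀⁻¹).mono'
    (hδ.of_uncurry_right.aemeasurable.div
      (aestronglyMeasurable_setIntegral_mul hδ hs.measurableSet hlamc).aemeasurable).aestronglyMeasurable
    (ae_of_all _ fun ω => abs_apply_div_setIntegral_mul_le hs hδ.of_uncurry_left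
      (h01 ω) hlamc hlam₀ hlam ht)

theorem abs_integral_div_setIntegral_mul_le (hδ : Measurable fun q : Ω × ℝ => δ q.1 q.2)
    (hs : IsCompact s) (h01 : ∀ ω, ∀ t ∈ s, δ ω t = 0 ∨ δ ω t = 1) (hlamc : ContinuousOn lam s)
    (hlam₀ : 0 < lam₀) (hlam : ∀ t ∈ s, lam₀ ≤ lam t ∧ lam t ≤ Λ)
    (hI : Integrable (fun ω => (∫ v in s, δ ω v)⁻¹) μ) {t : ℝ} (ht : t ∈ s) :
    |∫ ω, δ ω t / (∫ v in s, δ ω v * lam v) ∂μ| ≤ lam₀⁻¹ * ∫ ω, (∫ v in s, δ ω v)⁻¹ ∂μ := by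
  rw [← integral_const_mul, ← Real.norm_eq_abs]
  refine norm_integral_le_of_norm_le (hI.const_mul _) (ae_of_all _ fun ω => ?_)
  exact abs_apply_div_setIntegral_mul_le hs hδ.of_uncurry_left (h01 ω) hlamc hlam₀ hlam ht

theorem abs_integral_div_setIntegral_mul_sub_le [IsFiniteMeasure μ]
    (hδ : Measurable fun q : Ω × ℝ => δ q.1 q.2) (hs : IsCompact s)
    (h01 : ∀ ω, ∀ t ∈ s, δ ω t = 0 ∨ δ ω t = 1) (hlamc : ContinuousOn lam s)
    (hlam₀ : 0 < lam₀) (hlam : ∀ t ∈ s, lam₀ ≤ lam t ∧ lam t ≤ Λ) (hp : 1 < p)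
    (hrecip : Integrable (fun ω => (∫ v in s, δ ω v) ^ (-p)) μ) {C t₁ t₂ : ℝ} (ht₁ : t₁ ∈ s)
    (ht₂ : t₂ ∈ s) (hHolder : μ.real {ω | δ ω t₁ ≠ δ ω t₂} ≤ C * |t₁ - t₂| ^ p) :
    |∫ ω, δ ω t₁ / (∫ v in s, δ ω v * lam v) ∂μ - ∫ ω, δ ω t₂ / (∫ v in s, δ ω v * lam v) ∂μ|
      ≤ lam₀⁻¹ * (C + ∫ ω, (∫ v in s, δ ω v) ^ (-p) ∂μ) * |t₁ - t₂| ^ (p - 1) := by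
  rcases eq_or_ne t₁ t₂ with rfl | hne
  · simp [Real.zero_rpow (by linarith : p - 1 ≠ 0)]
  have hI := integrable_inv_setIntegral hδ hs.measurableSet h01 hp.le hrecip
  have hA : MeasurableSet {ω | δ ω t₁ ≠ δ ω t₂} :=
    (measurableSet_eq_fun hδ.of_uncurry_right hδ.of_uncurry_right).compl
  have hjump : ∀ ω, |δ ω t₁ / (∫ v in s, δ ω v * lam v) - δ ω t₂ / ∫ v in s, δ ω v * lam v| ≤
      {ω | δ ω t₁ ≠ δ ω t₂}.indicator (fun ω => lam₀⁻¹ * (∫ v in s, δ ω v)⁻¹) ω := by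
    intro ω
    by_cases hω : δ ω t₁ = δ ω t₂
    · simp [hω]
    rw [indicator_of_mem hω, div_sub_div_same]
    refine abs_div_setIntegral_mul_le hs hδ.of_uncurry_left (h01 ω) hlamc hlam₀ hlam ?_
    rcases h01 ω t₁ ht₁ with h | h <;> rcases h01 ω t₂ ht₂ with h' | h' <;> simp [h, h']
  calc _ ≤ ∫ ω in {ω | δ ω t₁ ≠ δ ω t₂}, lam₀⁻¹ * (∫ v in s, δ ω v)⁻¹ ∂μ := by
        rw [← integral_sub (integrable_div_setIntegral_mul hδ hs h01 hlamc hlam₀ hlam hI ht₁)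
          (integrable_div_setIntegral_mul hδ hs h01 hlamc hlam₀ hlam hI ht₂),
          ← integral_indicator hA, ← Real.norm_eq_abs]
        exact norm_integral_le_of_norm_le ((hI.const_mul _).indicator hA) (ae_of_all _ hjump)
    _ ≤ lam₀⁻¹ * ((C + ∫ ω, (∫ v in s, δ ω v) ^ (-p) ∂μ) * |t₁ - t₂| ^ (p - 1)) := by
        rw [integral_const_mul]
        gcongr
        exact setIntegral_inv_le_of_measureReal_le
          (fun ω => setIntegral_nonneg_of_eq_zero_or_eq_one hs.measurableSet (h01 ω)) hp.le hrecip
          (abs_pos.2 (sub_ne_zero.2 hne)) hHolder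
    _ = _ := by ring

end Expectation

theorem stmt_7_general {Ω : Type*} [MeasurableSpace Ω] (μ : Measure Ω) [IsProbabilityMeasure μ]
    (δ : Ω → ℝ → ℝ) (hδ : Measurable (fun q : Ω × ℝ => δ q.1 q.2))
    (h01 : ∀ ω, ∀ t ∈ Set.Icc (0:ℝ) 1, δ ω t = 0 ∨ δ ω t = 1)
    (lam lam' : ℝ → ℝ)
    (hderiv : ∀ t ∈ Set.Icc (0:ℝ) 1, HasDerivAt lam (lam' t) t)
    (lam₀ Λ L : ℝ) (hlam₀ : 0 < lam₀)
    (hlam : ∀ t ∈ Set.Icc (0:ℝ) 1, lam₀ ≤ lam t ∧ lam t ≤ Λ)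
    (hL : ∀ t ∈ Set.Icc (0:ℝ) 1, |lam' t| ≤ L)
    (p : ℝ) (hp : 2 < p)
    (hrecipP : Integrable (fun ω => (∫ v in Set.Icc (0:ℝ) 1, δ ω v) ^ (-p)) μ)
    (C : ℝ)
    (hHolder : ∀ s ∈ Set.Icc (0:ℝ) 1, ∀ t ∈ Set.Icc (0:ℝ) 1,
      (μ {ω | δ ω s ≠ δ ω t}).toReal ≤ C * |s - t| ^ p)
    (lamStar : ℝ → ℝ)
    (hlamStar : ∀ t, lamStar t =
      ∫ ω, δ ω t * lam t / (∫ v in Set.Icc (0:ℝ) 1, δ ω v * lam v) ∂μ) :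
    ∀ t ∈ Set.Ioo (0:ℝ) 1,
      HasDerivAt lamStar
        (∫ ω, δ ω t * lam' t / (∫ v in Set.Icc (0:ℝ) 1, δ ω v * lam v) ∂μ) t ∧
      |∫ ω, δ ω t * lam' t / (∫ v in Set.Icc (0:ℝ) 1, δ ω v * lam v) ∂μ|
        ≤ (L / lam₀) * ∫ ω, (∫ v in Set.Icc (0:ℝ) 1, δ ω v)⁻¹ ∂μ := by
  intro t ht
  have htI : t ∈ Icc (0:ℝ) 1 := Ioo_subset_Icc_self ht
  have hlamc : ContinuousOn lam (Icc 0 1) := fun v hv =>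
    (hderiv v hv).continuousAt.continuousWithinAt
  set F : ℝ → ℝ := fun u => ∫ ω, δ ω u / (∫ v in Icc (0:ℝ) 1, δ ω v * lam v) ∂μ
  have hfactor : ∀ (g : ℝ → ℝ) (u : ℝ),
      ∫ ω, δ ω u * g u / (∫ v in Icc (0:ℝ) 1, δ ω v * lam v) ∂μ = g u * F u := fun g u => by
    rw [← integral_const_mul]
    congr 1 with ω
    ring
  have hF : HasDerivAt F 0 t := by
    refine hasDerivAt_zero_of_abs_sub_le_rpow (r := p - 1)
      (K := lam₀⁻¹ * (C + ∫ ω, (∫ v in Icc (0:ℝ) 1, δ ω v) ^ (-p) ∂μ)) (by linarith) ?_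
    filter_upwards [Icc_mem_nhds ht.1 ht.2] with u hu
    exact abs_integral_div_setIntegral_mul_sub_le hδ isCompact_Icc h01 hlamc hlam₀ hlam
      (by linarith) hrecipP hu htI (hHolder u hu t htI)
  have hI := integrable_inv_setIntegral hδ measurableSet_Icc h01 (by linarith) hrecipP
  rw [hfactor lam']
  refine ⟨?_, ?_⟩
  · have hstar : lamStar = lam * F := funext fun u => (hlamStar u).trans (hfactor lam u)
    have hprod := (hderiv t htI).mul hF
    rwa [mul_zero, add_zero, ← hstar] at hprod
  · rw [abs_mul, div_eq_mul_inv, mul_assoc]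
    exact mul_le_mul (hL t htI)
      (abs_integral_div_setIntegral_mul_le hδ isCompact_Icc h01 hlamc hlam₀ hlam hI htI)
      (abs_nonneg _) ((abs_nonneg _).trans (hL t htI))

/-- Differentiability of `λ*(t) = E[δ(·,t)λ(t) / ∫₀¹ δ(·,v)λ(v) dv]` on `(0,1)` under the
reciprocal moment condition and the Hölder-type condition on the indicator process, with
derivative `E[δ(·,t)λ'(t) / ∫₀¹ δ(·,v)λ(v) dv]` bounded by `(L/λ₀) E[(∫₀¹ δ(·,v) dv)⁻¹]`. -/
theorem stmt_7 {Ω : Type*} [MeasurableSpace Ω] (μ : Measure Ω) [IsProbabilityMeasure μ]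
    (δ : Ω → ℝ → ℝ) (hδ : Measurable (fun q : Ω × ℝ => δ q.1 q.2))
    (h01 : ∀ ω, ∀ t ∈ Set.Icc (0:ℝ) 1, δ ω t = 0 ∨ δ ω t = 1)
    (lam lam' : ℝ → ℝ)
    (hderiv : ∀ t ∈ Set.Icc (0:ℝ) 1, HasDerivAt lam (lam' t) t)
    (hderivCont : ContinuousOn lam' (Set.Icc (0:ℝ) 1))
    (lam₀ Λ L : ℝ) (hlam₀ : 0 < lam₀)
    (hlam : ∀ t ∈ Set.Icc (0:ℝ) 1, lam₀ ≤ lam t ∧ lam t ≤ Λ)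
    (hL : ∀ t ∈ Set.Icc (0:ℝ) 1, |lam' t| ≤ L)
    (p : ℝ) (hp : 2 < p)
    (hrecipP : Integrable (fun ω => (∫ v in Set.Icc (0:ℝ) 1, δ ω v) ^ (-p)) μ)
    (C : ℝ) (hC : 0 < C)
    (hHolder : ∀ s ∈ Set.Icc (0:ℝ) 1, ∀ t ∈ Set.Icc (0:ℝ) 1,
      (μ {ω | δ ω s ≠ δ ω t}).toReal ≤ C * |s - t| ^ p)
    (lamStar : ℝ → ℝ)
    (hlamStar : ∀ t, lamStar t =
      ∫ ω, δ ω t * lam t / (∫ v in Set.Icc (0:ℝ) 1, δ ω v * lam v) ∂μ) :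
    ∀ t ∈ Set.Ioo (0:ℝ) 1,
      HasDerivAt lamStar
        (∫ ω, δ ω t * lam' t / (∫ v in Set.Icc (0:ℝ) 1, δ ω v * lam v) ∂μ) t ∧
      |∫ ω, δ ω t * lam' t / (∫ v in Set.Icc (0:ℝ) 1, δ ω v * lam v) ∂μ|
        ≤ (L / lam₀) * ∫ ω, (∫ v in Set.Icc (0:ℝ) 1, δ ω v)⁻¹ ∂μ :=
  stmt_7_general μ δ hδ h01 lam lam' hderiv lam₀ Λ L hlam₀ hlam hL p hp hrecipP C hHolder lamStar
    hlamStar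
end

section
/- Let K : ℝ → [0,∞) be a measurable kernel supported in [−1,1] with ∫_{−1}^1 K(w) dw = 1, and let λ : [0,1] → ℝ be differentiable with |λ′(t)| ≤ L for all t. For 0 < h ≤ 1 and t ∈ [0,1], define κ₀(t;h) = ∫_{max(−1, −t/h)}^{min(1, (1−t)/h)} K(w) dw. Then for every t ∈ [0,1], | ∫₀¹ h^{-1} K((u − t)/h) λ(u) du − κ₀(t;h) λ(t) | ≤ L h. -/
open MeasureTheory Set

/-!
Substituting `u = t + h w` turns the integral into `∫ K(w) λ(t + h w) dw` over
`[-t/h, (1-t)/h]`; since `K` vanishes off `[-1, 1]`, `κ₀(t;h)` is the integral of `K` over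
this same interval. On the support of `K` we have `|w| ≤ 1`, hence
`|λ(t + h w) - λ(t)| ≤ L h` by the mean value inequality, and the difference is at most
`L h κ₀(t;h) ≤ L h`.
-/

theorem intervalIntegral.integral_inv_smul_comp_sub_div {E : Type*} [NormedAddCommGroup E]
    [NormedSpace ℝ E] (g : ℝ → E) (h t a b : ℝ) :
    ∫ u in a..b, h⁻¹ • g ((u - t) / h) = ∫ w in (a - t) / h..(b - t) / h, g w := by
  simp only [intervalIntegral.integral_smul, sub_div,
    intervalIntegral.inv_smul_integral_comp_div_sub]

theorem intervalIntegral.integral_inv_mul_comp_sub_div_mul (K f : ℝ → ℝ) {h : ℝ}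
    (hh : h ≠ 0) (t a b : ℝ) :
    ∫ u in a..b, h⁻¹ * K ((u - t) / h) * f u =
      ∫ w in (a - t) / h..(b - t) / h, K w * f (t + h * w) := by
  rw [← intervalIntegral.integral_inv_smul_comp_sub_div]
  congr 1 with u
  rw [smul_eq_mul, mul_assoc, mul_div_cancel₀ _ hh, add_sub_cancel]

theorem integrable_of_support_subset_Icc {E : Type*} [NormedAddCommGroup E] [NormedSpace ℝ E]
    {f : ℝ → E} {a b : ℝ} (hab : a ≤ b) (hf : Function.support f ⊆ Icc a b)
    (hne : ∫ x in a..b, f x ≠ 0) : Integrable f :=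
  (integrableOn_iff_integrable_of_support_subset hf).1 <|
    (intervalIntegrable_iff_integrableOn_Icc_of_le hab).1 <|
      intervalIntegral.intervalIntegrable_of_integral_ne_zero hne

theorem intervalIntegral.integral_eq_of_support_subset_Icc {E : Type*} [NormedAddCommGroup E]
    [NormedSpace ℝ E] {f : ℝ → E} {a b c d : ℝ} (hf : Function.support f ⊆ Icc c d)
    (h : max a c ≤ min b d) : ∫ x in a..b, f x = ∫ x in max a c..min b d, f x := by
  have hab : a ≤ b := (le_max_left a c).trans (h.trans (min_le_left b d))
  rw [intervalIntegral.integral_of_le hab, intervalIntegral.integral_of_le h,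
    ← integral_Icc_eq_integral_Ioc, ← integral_Icc_eq_integral_Ioc]
  refine setIntegral_eq_of_subset_of_forall_sdiff_eq_zero measurableSet_Icc
    (Icc_subset_Icc (le_max_left a c) (min_le_left b d)) fun x ⟨hx, hx'⟩ => ?_
  by_contra hfx
  obtain ⟨hcx, hxd⟩ := hf hfx
  exact hx' ⟨max_le hx.1 hcx, le_min hx.2 hxd⟩

theorem mapsTo_add_mul_Icc {t h c d : ℝ} (hh : 0 < h) :
    MapsTo (fun w => t + h * w) (Icc ((c - t) / h) ((d - t) / h)) (Icc c d) := by
  intro w ⟨hcw, hwd⟩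
  rw [div_le_iff₀ hh] at hcw
  rw [le_div_iff₀ hh] at hwd
  constructor <;> linarith

theorem abs_kernel_mul_sub_le {K lam lam' : ℝ → ℝ} {s : Set ℝ} {L x h w : ℝ}
    (hs : Convex ℝ s) (hKnonneg : 0 ≤ K w) (hKsupp : Function.support K ⊆ Icc (-1) 1)
    (hderiv : ∀ y ∈ s, HasDerivWithinAt lam (lam' y) s y) (hL : ∀ y ∈ s, |lam' y| ≤ L)
    (hh : 0 ≤ h) (hx : x ∈ s) (hxw : x + h * w ∈ s) :
    |K w * (lam (x + h * w) - lam x)| ≤ K w * (L * h) := by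
  rcases eq_or_ne (K w) 0 with hK | hK
  · simp [hK]
  have hw : |w| ≤ 1 := abs_le.2 (hKsupp hK)
  have hL0 : 0 ≤ L := (abs_nonneg _).trans (hL x hx)
  have hlip : |lam (x + h * w) - lam x| ≤ L * |x + h * w - x| :=
    hs.norm_image_sub_le_of_norm_hasDerivWithin_le hderiv hL hx hxw
  rw [abs_mul, abs_of_nonneg hKnonneg]
  gcongr
  calc |lam (x + h * w) - lam x| ≤ L * (h * |w|) := by
        rwa [add_sub_cancel_left, abs_mul, abs_of_nonneg hh] at hlip
    _ ≤ L * h := mul_le_mul_of_nonneg_left (mul_le_of_le_one_right hh hw) hL0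

theorem stmt_15_general (K : ℝ → ℝ) (hKnonneg : ∀ w, 0 ≤ K w)
    (hKsupp : Function.support K ⊆ Set.Icc (-1:ℝ) 1)
    (hKint : (∫ w in (-1:ℝ)..1, K w) = 1)
    (lam lam' : ℝ → ℝ)
    (hderiv : ∀ t ∈ Set.Icc (0:ℝ) 1, HasDerivWithinAt lam (lam' t) (Set.Icc (0:ℝ) 1) t)
    (L : ℝ) (hL : ∀ t ∈ Set.Icc (0:ℝ) 1, |lam' t| ≤ L)
    (h : ℝ) (hh0 : 0 < h)
    (κ₀ : ℝ → ℝ)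
    (hκ₀ : ∀ t, κ₀ t = ∫ w in max (-1) (-t/h)..min 1 ((1-t)/h), K w) :
    ∀ t ∈ Set.Icc (0:ℝ) 1,
      |(∫ u in (0:ℝ)..1, h⁻¹ * K ((u - t) / h) * lam u) - κ₀ t * lam t| ≤ L * h := by
  intro t ht
  have hKI : Integrable K :=
    integrable_of_support_subset_Icc (by norm_num) hKsupp (by simp [hKint])
  have hsupp_max_le_min : max (-1) (-t / h) ≤ min 1 ((1 - t) / h) := by
    have hlo : -t / h ≤ 0 := div_nonpos_of_nonpos_of_nonneg (by linarith [ht.1]) hh0.le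
    have hhi : 0 ≤ (1 - t) / h := div_nonneg (by linarith [ht.2]) hh0.le
    simp only [max_le_iff, le_min_iff]
    refine ⟨⟨?_, ?_⟩, ?_, ?_⟩ <;> linarith
  have hab : (0 - t) / h ≤ (1 - t) / h := by gcongr; norm_num
  have hκ : κ₀ t = ∫ w in (0 - t) / h..(1 - t) / h, K w := by
    rw [intervalIntegral.integral_eq_of_support_subset_Icc hKsupp, hκ₀, zero_sub, max_comm,
      min_comm]
    rwa [zero_sub, max_comm, min_comm]
  have hint : IntervalIntegrable (fun w => K w * lam (t + h * w)) volume
      ((0 - t) / h) ((1 - t) / h) :=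
    (intervalIntegrable_iff_integrableOn_Icc_of_le hab).2 <|
      hKI.integrableOn.mul_continuousOn
        (ContinuousOn.comp (fun y hy => (hderiv y hy).continuousWithinAt) (by fun_prop)
          (mapsTo_add_mul_Icc hh0)) isCompact_Icc
  calc |(∫ u in (0:ℝ)..1, h⁻¹ * K ((u - t) / h) * lam u) - κ₀ t * lam t|
      = ‖∫ w in (0 - t) / h..(1 - t) / h, K w * (lam (t + h * w) - lam t)‖ := by
        rw [Real.norm_eq_abs, intervalIntegral.integral_inv_mul_comp_sub_div_mul _ _ hh0.ne', hκ,
          ← intervalIntegral.integral_mul_const,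
          ← intervalIntegral.integral_sub hint (hKI.intervalIntegrable.mul_const _)]
        simp only [mul_sub]
    _ ≤ ∫ w in (0 - t) / h..(1 - t) / h, K w * (L * h) :=
        intervalIntegral.norm_integral_le_of_norm_le hab
          (ae_of_all _ fun w hw => abs_kernel_mul_sub_le (convex_Icc 0 1) (hKnonneg w) hKsupp
            hderiv hL hh0.le ht (mapsTo_add_mul_Icc hh0 (Ioc_subset_Icc_self hw)))
          (hKI.intervalIntegrable.mul_const _)
    _ = κ₀ t * (L * h) := by rw [intervalIntegral.integral_mul_const, hκ]
    _ ≤ L * h := by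
        have hL0 : 0 ≤ L := (abs_nonneg _).trans (hL t ht)
        refine mul_le_of_le_one_left (by positivity) ?_
        rw [hκ₀]
        exact intervalIntegral.integral_mono_interval (le_max_left _ _) hsupp_max_le_min
          (min_le_left _ _) (ae_of_all _ hKnonneg) hKI.intervalIntegrable |>.trans_eq hKint

/-- Boundary-adjusted kernel approximation: for a kernel `K` supported in `[-1,1]` with unit
mass and a differentiable `λ` with `|λ'| ≤ L`, for all `t ∈ [0,1]` and `0 < h ≤ 1`:
`|∫₀¹ h⁻¹ K((u-t)/h) λ(u) du - κ₀(t;h) λ(t)| ≤ L h`, where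
`κ₀(t;h) = ∫_{max(-1,-t/h)}^{min(1,(1-t)/h)} K(w) dw`. -/
theorem stmt_15 (K : ℝ → ℝ) (hKmeas : Measurable K) (hKnonneg : ∀ w, 0 ≤ K w)
    (hKsupp : Function.support K ⊆ Set.Icc (-1:ℝ) 1)
    (hKint : (∫ w in (-1:ℝ)..1, K w) = 1)
    (lam lam' : ℝ → ℝ)
    (hderiv : ∀ t ∈ Set.Icc (0:ℝ) 1, HasDerivWithinAt lam (lam' t) (Set.Icc (0:ℝ) 1) t)
    (L : ℝ) (hL : ∀ t ∈ Set.Icc (0:ℝ) 1, |lam' t| ≤ L)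
    (h : ℝ) (hh0 : 0 < h) (hh1 : h ≤ 1)
    (κ₀ : ℝ → ℝ)
    (hκ₀ : ∀ t, κ₀ t = ∫ w in max (-1) (-t/h)..min 1 ((1-t)/h), K w) :
    ∀ t ∈ Set.Icc (0:ℝ) 1,
      |(∫ u in (0:ℝ)..1, h⁻¹ * K ((u - t) / h) * lam u) - κ₀ t * lam t| ≤ L * h :=
  stmt_15_general K hKnonneg hKsupp hKint lam lam' hderiv L hL h hh0 κ₀ hκ₀
end

section
/- Let K : ℝ → [0,∞) be a measurable kernel supported in [−1,1] with ∫_{−1}^1 K(w) dw = 1 and K(−w) = K(w) for all w. Let f : [0,1] → ℝ be twice differentiable with |f′| ≤ F₁ and |f″| ≤ F₂, and let λ : [0,1] → ℝ be differentiable with |λ| ≤ Λ and |λ′| ≤ L. Then for 0 < h ≤ 1/2: (i) for every t ∈ [0,1], | ∫₀¹ h^{-1} K((u−t)/h) (f(u) − f(t)) λ(u) du | ≤ F₁ Λ h ∫_{−1}^1 |w| K(w) dw; (ii) for every t ∈ [h, 1−h], | ∫₀¹ h^{-1} K((u−t)/h) (f(u) − f(t)) λ(u) du | ≤ ( (1/2)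 F₂ Λ + F₁ L ) h² ∫_{−1}^1 w² K(w) dw. -/
/-!
After the substitution `w = (u - t) / h` the integrand is controlled by moments of `K`.
For (i) the mean value bound `|f u - f t| ≤ F₁ |u - t|` suffices. For (ii) the window
`[t - h, t + h]` lies inside `[0, 1]`; write
`(f u - f t) λ u = f' t (u - t) λ t + R` with `|R| ≤ (F₂ Λ / 2 + F₁ L) (u - t)²`
(Taylor for `f`, Lipschitz for `λ`). The linear term integrates to zero because `K` is even.
-/

open MeasureTheory Set Filter Topology Function
open scoped Interval

section Calculus

variable {s : Set ℝ} {g g' g'' : ℝ → ℝ} {C : ℝ}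

theorem Convex.abs_sub_le_of_abs_hasDerivWithinAt_le (hs : Convex ℝ s)
    (hg : ∀ x ∈ s, HasDerivWithinAt g (g' x) s x) (hC : ∀ x ∈ s, |g' x| ≤ C)
    {x y : ℝ} (hx : x ∈ s) (hy : y ∈ s) : |g y - g x| ≤ C * |y - x| :=
  hs.norm_image_sub_le_of_norm_hasDerivWithin_le hg hC hx hy

theorem Convex.integral_eq_sub_of_hasDerivWithinAt (hs : Convex ℝ s)
    (hg : ∀ x ∈ s, HasDerivWithinAt g (g' x) s x) (hg' : ContinuousOn g' s)
    {a b : ℝ} (ha : a ∈ s) (hb : b ∈ s) : ∫ x in a..b, g' x = g b - g a := by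
  have hab : uIcc a b ⊆ s := hs.ordConnected.uIcc_subset ha hb
  refine intervalIntegral.integral_eq_sub_of_hasDeriv_right
    (fun x hx => (hg x (hab hx)).continuousWithinAt.mono hab) (fun x hx => ?_)
    (hg'.mono hab).intervalIntegrable
  have hsx : s ∈ 𝓝 x :=
    mem_of_superset (Ioo_mem_nhds hx.1 hx.2) (Ioo_subset_Icc_self.trans hab)
  exact ((hg x (mem_of_mem_nhds hsx)).hasDerivAt hsx).hasDerivWithinAt

theorem Convex.abs_sub_sub_deriv_mul_le (hs : Convex ℝ s)
    (hg : ∀ x ∈ s, HasDerivWithinAt g (g' x) s x)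
    (hg' : ∀ x ∈ s, HasDerivWithinAt g' (g'' x) s x) (hC : ∀ x ∈ s, |g'' x| ≤ C)
    {t u : ℝ} (ht : t ∈ s) (hu : u ∈ s) :
    |g u - g t - g' t * (u - t)| ≤ C / 2 * (u - t) ^ 2 := by
  have htu : uIcc t u ⊆ s := hs.ordConnected.uIcc_subset ht hu
  have hg'c : ContinuousOn g' s := fun x hx => (hg' x hx).continuousWithinAt
  have hremainder : ∫ x in t..u, (g' x - g' t) = g u - g t - g' t * (u - t) := by
    rw [intervalIntegral.integral_sub (hg'c.mono htu).intervalIntegrable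
      intervalIntegrable_const, hs.integral_eq_sub_of_hasDerivWithinAt hg hg'c ht hu,
      intervalIntegral.integral_const, smul_eq_mul]
    ring
  rw [← hremainder]
  calc |∫ x in t..u, (g' x - g' t)| ≤ ∫ x in Ι t u, |g' x - g' t| :=
        intervalIntegral.norm_integral_le_integral_norm_uIoc (f := fun x => g' x - g' t)
    _ ≤ ∫ x in Ι t u, C * |x - t| ^ 1 := by
        refine integral_mono_of_nonneg (Eventually.of_forall fun x => abs_nonneg _)
          (by fun_prop : Continuous fun x => C * |x - t| ^ 1).integrableOn_uIoc
          (ae_restrict_of_forall_mem measurableSet_uIoc fun x hx => ?_)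
        simpa only [pow_one] using
          hs.abs_sub_le_of_abs_hasDerivWithinAt_le hg' hC ht (htu (uIoc_subset_uIcc hx))
    _ = C / 2 * (u - t) ^ 2 := by
        rw [integral_const_mul, integral_pow_abs_sub_uIoc, sq_abs]
        ring

end Calculus

theorem intervalIntegral_eq_integral_of_support_subset_Icc {E : Type*} [NormedAddCommGroup E]
    [NormedSpace ℝ E] {φ : ℝ → E} {a b : ℝ} (hab : a ≤ b)
    (hφ : support φ ⊆ Icc a b) : ∫ x in a..b, φ x = ∫ x, φ x := by
  rw [intervalIntegral.integral_of_le hab, ← integral_Icc_eq_integral_Ioc,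
    setIntegral_eq_integral_of_forall_compl_eq_zero]
  exact fun x hx => notMem_support.1 fun hφx => hx (hφ hφx)

theorem IntervalIntegrable.integrable_of_support_subset_Icc {E : Type*} [NormedAddCommGroup E]
    {φ : ℝ → E} {a b : ℝ}
    (hφ : IntervalIntegrable φ volume a b) (hsupp : support φ ⊆ Icc a b) : Integrable φ :=
  (integrableOn_iff_integrable_of_support_subset hsupp).1
    (by rw [integrableOn_Icc_iff_integrableOn_Ioc]; exact hφ.1)

theorem MeasureTheory.Integrable.continuous_mul_of_support_subset {K q : ℝ → ℝ} {k : Set ℝ}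
    (hK : Integrable K) (hk : IsCompact k) (hsupp : support K ⊆ k) (hq : Continuous q) :
    Integrable fun w => q w * K w :=
  (integrableOn_iff_integrable_of_support_subset
    ((support_mul_subset_right q K).trans hsupp)).1
    (hK.integrableOn.continuousOn_mul hq.continuousOn hk)

theorem integral_comp_sub_div {E : Type*} [NormedAddCommGroup E] [NormedSpace ℝ E] (g : ℝ → E)
    (t : ℝ) {h : ℝ} (hh : 0 < h) :
    ∫ u, g ((u - t) / h) = h • ∫ w, g w := by
  rw [integral_sub_right_eq_self (fun x => g (x / h)) t, Measure.integral_comp_div g h,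
    abs_of_pos hh]

theorem support_comp_sub_div_subset {M : Type*} [Zero M] {φ : ℝ → M}
    (hφ : support φ ⊆ Icc (-1) 1) (t : ℝ) {h : ℝ} (hh : 0 < h) :
    support (fun u => φ ((u - t) / h)) ⊆ Icc (t - h) (t + h) := by
  intro u hu
  obtain ⟨hle, hge⟩ := hφ hu
  rw [le_div_iff₀ hh] at hle
  rw [div_le_iff₀ hh] at hge
  constructor <;> linarith

theorem integral_comp_sub_div_mul {K : ℝ → ℝ} (hsupp : support K ⊆ Icc (-1) 1) (q : ℝ → ℝ)
    (t : ℝ) {h : ℝ} (hh : 0 < h) :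
    ∫ u, q ((u - t) / h) * K ((u - t) / h) = h * ∫ w in (-1:ℝ)..1, q w * K w := by
  rw [integral_comp_sub_div (fun w => q w * K w) t hh, smul_eq_mul,
    intervalIntegral_eq_integral_of_support_subset_Icc (by norm_num)
      ((support_mul_subset_right q K).trans hsupp)]

theorem integral_mul_eq_zero_of_even {K : ℝ → ℝ} (hK : ∀ w, K (-w) = K w) :
    ∫ w, w * K w = 0 := by
  have hneg := integral_neg_eq_self (fun w => w * K w) volume
  simp only [hK, neg_mul, integral_neg] at hneg
  linarith

theorem abs_intervalIntegral_le_integral {φ B : ℝ → ℝ} {a b : ℝ} (hab : a ≤ b)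
    (hB : Integrable B) (hB0 : ∀ x, 0 ≤ B x) (hφB : ∀ x ∈ Icc a b, |φ x| ≤ B x) :
    |∫ x in a..b, φ x| ≤ ∫ x, B x :=
  calc |∫ x in a..b, φ x| ≤ ∫ x in a..b, B x :=
        intervalIntegral.norm_integral_le_of_norm_le (f := φ) hab
          (Eventually.of_forall fun x hx => hφB x (Ioc_subset_Icc_self hx))
          hB.intervalIntegrable
    _ ≤ ∫ x, B x := by
        rw [intervalIntegral.integral_of_le hab]
        exact setIntegral_le_integral hB (Eventually.of_forall hB0)

section Bias

variable {K f f' f'' lam lam' : ℝ → ℝ} {F₁ F₂ Λ L a b h t : ℝ}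

theorem Convex.abs_sub_mul_sub_deriv_mul_le {s : Set ℝ} (hs : Convex ℝ s)
    (hf : ∀ x ∈ s, HasDerivWithinAt f (f' x) s x)
    (hf' : ∀ x ∈ s, HasDerivWithinAt f' (f'' x) s x)
    (hF₁ : ∀ x ∈ s, |f' x| ≤ F₁) (hF₂ : ∀ x ∈ s, |f'' x| ≤ F₂)
    (hlam : ∀ x ∈ s, HasDerivWithinAt lam (lam' x) s x) (hΛ : ∀ x ∈ s, |lam x| ≤ Λ)
    (hL : ∀ x ∈ s, |lam' x| ≤ L) {u : ℝ} (ht : t ∈ s) (hu : u ∈ s) :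
    |(f u - f t) * lam u - f' t * (u - t) * lam t| ≤ (F₂ / 2 * Λ + F₁ * L) * (u - t) ^ 2 := by
  have hF₁0 : 0 ≤ F₁ := (abs_nonneg _).trans (hF₁ t ht)
  have htaylor := hs.abs_sub_sub_deriv_mul_le hf hf' hF₂ ht hu
  have hlip := hs.abs_sub_le_of_abs_hasDerivWithinAt_le hlam hL ht hu
  calc |(f u - f t) * lam u - f' t * (u - t) * lam t|
      = |(f u - f t - f' t * (u - t)) * lam u + f' t * (u - t) * (lam u - lam t)| := by
        congr 1
        ring
    _ ≤ |f u - f t - f' t * (u - t)| * |lam u| + |f' t| * |u - t| * |lam u - lam t| := by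
        rw [← abs_mul, ← abs_mul, ← abs_mul]
        exact abs_add_le _ _
    _ ≤ F₂ / 2 * (u - t) ^ 2 * Λ + F₁ * |u - t| * (L * |u - t|) := by
        have hF₁u : |f' t| * |u - t| ≤ F₁ * |u - t| := by gcongr; exact hF₁ t ht
        exact add_le_add
          (mul_le_mul htaylor (hΛ u hu) (abs_nonneg _) ((abs_nonneg _).trans htaylor))
          (mul_le_mul hF₁u hlip (abs_nonneg _) (by positivity))
    _ = (F₂ / 2 * Λ + F₁ * L) * (u - t) ^ 2 := by
        rw [← sq_abs (u - t)]
        ring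

theorem abs_kernel_bias_le_first_moment (hK : Integrable K) (hK0 : ∀ w, 0 ≤ K w)
    (hKsupp : support K ⊆ Icc (-1) 1)
    (hf : ∀ x ∈ Icc a b, HasDerivWithinAt f (f' x) (Icc a b) x)
    (hF₁ : ∀ x ∈ Icc a b, |f' x| ≤ F₁) (hΛ : ∀ x ∈ Icc a b, |lam x| ≤ Λ) (hh : 0 < h)
    (ht : t ∈ Icc a b) :
    |∫ u in a..b, h⁻¹ * K ((u - t) / h) * (f u - f t) * lam u|
      ≤ F₁ * Λ * h * ∫ w in (-1:ℝ)..1, |w| * K w := by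
  have hF₁0 : 0 ≤ F₁ := (abs_nonneg _).trans (hF₁ t ht)
  have hΛ0 : 0 ≤ Λ := (abs_nonneg _).trans (hΛ t ht)
  have hmoment : Integrable fun u => |(u - t) / h| * K ((u - t) / h) :=
    ((hK.continuous_mul_of_support_subset isCompact_Icc hKsupp continuous_abs).comp_div
      hh.ne').comp_sub_right t
  calc _ ≤ ∫ u, F₁ * Λ * (|(u - t) / h| * K ((u - t) / h)) := by
        refine abs_intervalIntegral_le_integral (ht.1.trans ht.2) (hmoment.const_mul _)
          (fun u => by have := hK0 ((u - t) / h); positivity) fun u hu => ?_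
        have hlip := (convex_Icc a b).abs_sub_le_of_abs_hasDerivWithinAt_le hf hF₁ ht hu
        have hk := hK0 ((u - t) / h)
        rw [abs_mul, abs_mul, abs_mul, abs_inv, abs_of_pos hh, abs_of_nonneg hk, abs_div,
          abs_of_pos hh]
        calc h⁻¹ * K ((u - t) / h) * |f u - f t| * |lam u|
            ≤ h⁻¹ * K ((u - t) / h) * (F₁ * |u - t|) * Λ := by
              gcongr
              exact hΛ u hu
          _ = F₁ * Λ * (|u - t| / h * K ((u - t) / h)) := by ring
    _ = F₁ * Λ * h * ∫ w in (-1:ℝ)..1, |w| * K w := by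
        rw [integral_const_mul, integral_comp_sub_div_mul hKsupp (fun w => |w|) t hh]
        ring

theorem intervalIntegral_first_moment_comp_sub_div_eq_zero (hKsupp : support K ⊆ Icc (-1) 1)
    (hKsymm : ∀ w, K (-w) = K w) (hh : 0 < h) (ht : t ∈ Icc (a + h) (b - h)) :
    ∫ u in a..b, (u - t) / h * K ((u - t) / h) = 0 := by
  have hwindow : Icc (t - h) (t + h) ⊆ Icc a b :=
    Icc_subset_Icc (by linarith [ht.1]) (by linarith [ht.2])
  have hsupp : support (fun u => (u - t) / h * K ((u - t) / h)) ⊆ Icc a b :=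
    (support_mul_subset_right _ _).trans <| (support_comp_sub_div_subset hKsupp t hh).trans hwindow
  rw [intervalIntegral_eq_integral_of_support_subset_Icc (by linarith [ht.1, ht.2]) hsupp,
    integral_comp_sub_div (fun w => w * K w) t hh, integral_mul_eq_zero_of_even hKsymm, smul_zero]

theorem intervalIntegrable_kernel_mul (hK : Integrable K) (hab : a ≤ b)
    (hf : ContinuousOn f (Icc a b)) (hlam : ContinuousOn lam (Icc a b)) (hh : 0 < h) :
    IntervalIntegrable (fun u => h⁻¹ * K ((u - t) / h) * (f u - f t) * lam u) volume a b := by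
  rw [intervalIntegrable_iff_integrableOn_Icc_of_le hab]
  have hKt : Integrable fun u => h⁻¹ * K ((u - t) / h) :=
    ((hK.comp_div hh.ne').comp_sub_right t).const_mul h⁻¹
  have hcont : ContinuousOn (fun u => (f u - f t) * lam u) (Icc a b) :=
    (hf.sub continuousOn_const).mul hlam
  exact (hKt.integrableOn.mul_continuousOn hcont isCompact_Icc).congr_fun
    (fun u _ => by ring) measurableSet_Icc

theorem abs_kernel_bias_le_second_moment (hK : Integrable K) (hK0 : ∀ w, 0 ≤ K w)
    (hKsupp : support K ⊆ Icc (-1) 1) (hKsymm : ∀ w, K (-w) = K w)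
    (hf : ∀ x ∈ Icc a b, HasDerivWithinAt f (f' x) (Icc a b) x)
    (hf' : ∀ x ∈ Icc a b, HasDerivWithinAt f' (f'' x) (Icc a b) x)
    (hF₁ : ∀ x ∈ Icc a b, |f' x| ≤ F₁) (hF₂ : ∀ x ∈ Icc a b, |f'' x| ≤ F₂)
    (hlam : ∀ x ∈ Icc a b, HasDerivWithinAt lam (lam' x) (Icc a b) x)
    (hΛ : ∀ x ∈ Icc a b, |lam x| ≤ Λ) (hL : ∀ x ∈ Icc a b, |lam' x| ≤ L) (hh : 0 < h)
    (ht : t ∈ Icc (a + h) (b - h)) :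
    |∫ u in a..b, h⁻¹ * K ((u - t) / h) * (f u - f t) * lam u|
      ≤ (F₂ / 2 * Λ + F₁ * L) * h ^ 2 * ∫ w in (-1:ℝ)..1, w ^ 2 * K w := by
  have htab : t ∈ Icc a b := ⟨by linarith [ht.1], by linarith [ht.2]⟩
  have hab : a ≤ b := htab.1.trans htab.2
  set C := F₂ / 2 * Λ + F₁ * L
  have hC : 0 ≤ C := by
    have := (abs_nonneg _).trans (hF₁ t htab)
    have := (abs_nonneg _).trans (hF₂ t htab)
    have := (abs_nonneg _).trans (hΛ t htab)
    have := (abs_nonneg _).trans (hL t htab)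
    positivity
  have hfirst : Integrable fun u => (u - t) / h * K ((u - t) / h) :=
    ((hK.continuous_mul_of_support_subset isCompact_Icc hKsupp continuous_id).comp_div
      hh.ne').comp_sub_right t
  have hsecond : Integrable fun u => ((u - t) / h) ^ 2 * K ((u - t) / h) :=
    ((hK.continuous_mul_of_support_subset isCompact_Icc hKsupp (continuous_pow 2)).comp_div
      hh.ne').comp_sub_right t
  -- Subtract the linear Taylor term, whose integral vanishes because `K` is even.
  have hlinear : ∫ u in a..b, f' t * lam t * ((u - t) / h * K ((u - t) / h)) = 0 := by
    rw [intervalIntegral.integral_const_mul,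
      intervalIntegral_first_moment_comp_sub_div_eq_zero hKsupp hKsymm hh ht, mul_zero]
  rw [← sub_zero (∫ u in a..b, _), ← hlinear, ← intervalIntegral.integral_sub
    (intervalIntegrable_kernel_mul hK hab (HasDerivWithinAt.continuousOn hf)
      (HasDerivWithinAt.continuousOn hlam) hh) (hfirst.const_mul _).intervalIntegrable]
  calc _ ≤ ∫ u, C * h * (((u - t) / h) ^ 2 * K ((u - t) / h)) := by
        refine abs_intervalIntegral_le_integral hab (hsecond.const_mul _)
          (fun u => by have := hK0 ((u - t) / h); positivity) fun u hu => ?_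
        have hk : 0 ≤ h⁻¹ * K ((u - t) / h) := by have := hK0 ((u - t) / h); positivity
        calc |h⁻¹ * K ((u - t) / h) * (f u - f t) * lam u
              - f' t * lam t * ((u - t) / h * K ((u - t) / h))|
            = |h⁻¹ * K ((u - t) / h) * ((f u - f t) * lam u - f' t * (u - t) * lam t)| := by
              congr 1
              field_simp
          _ = h⁻¹ * K ((u - t) / h) * |(f u - f t) * lam u - f' t * (u - t) * lam t| := by
              rw [abs_mul, abs_of_nonneg hk]
          _ ≤ h⁻¹ * K ((u - t) / h) * (C * (u - t) ^ 2) := by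
              gcongr
              exact (convex_Icc a b).abs_sub_mul_sub_deriv_mul_le hf hf' hF₁ hF₂ hlam hΛ hL
                htab hu
          _ = C * h * (((u - t) / h) ^ 2 * K ((u - t) / h)) := by
              field_simp
    _ = C * h ^ 2 * ∫ w in (-1:ℝ)..1, w ^ 2 * K w := by
        rw [integral_const_mul, integral_comp_sub_div_mul hKsupp (· ^ 2) t hh]
        ring

end Bias

theorem stmt_16_general (K : ℝ → ℝ) (hKnonneg : ∀ w, 0 ≤ K w)
    (hKsupp : Function.support K ⊆ Set.Icc (-1:ℝ) 1)
    (hKint : (∫ w in (-1:ℝ)..1, K w) = 1)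
    (hKsymm : ∀ w, K (-w) = K w)
    (f f' f'' : ℝ → ℝ)
    (hf' : ∀ t ∈ Set.Icc (0:ℝ) 1, HasDerivWithinAt f (f' t) (Set.Icc (0:ℝ) 1) t)
    (hf'' : ∀ t ∈ Set.Icc (0:ℝ) 1, HasDerivWithinAt f' (f'' t) (Set.Icc (0:ℝ) 1) t)
    (F₁ F₂ : ℝ)
    (hF₁ : ∀ t ∈ Set.Icc (0:ℝ) 1, |f' t| ≤ F₁)
    (hF₂ : ∀ t ∈ Set.Icc (0:ℝ) 1, |f'' t| ≤ F₂)
    (lam lam' : ℝ → ℝ)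
    (hlam' : ∀ t ∈ Set.Icc (0:ℝ) 1, HasDerivWithinAt lam (lam' t) (Set.Icc (0:ℝ) 1) t)
    (Λ L : ℝ)
    (hΛ : ∀ t ∈ Set.Icc (0:ℝ) 1, |lam t| ≤ Λ)
    (hL : ∀ t ∈ Set.Icc (0:ℝ) 1, |lam' t| ≤ L)
    (h : ℝ) (hh0 : 0 < h) :
    (∀ t ∈ Set.Icc (0:ℝ) 1,
      |∫ u in (0:ℝ)..1, h⁻¹ * K ((u - t) / h) * (f u - f t) * lam u|
        ≤ F₁ * Λ * h * ∫ w in (-1:ℝ)..1, |w| * K w) ∧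
    (∀ t ∈ Set.Icc h (1 - h),
      |∫ u in (0:ℝ)..1, h⁻¹ * K ((u - t) / h) * (f u - f t) * lam u|
        ≤ ((1/2) * F₂ * Λ + F₁ * L) * h ^ 2 * ∫ w in (-1:ℝ)..1, w ^ 2 * K w) := by
  -- A non-integrable function has integral `0`, so the normalisation forces integrability.
  have hK : Integrable K :=
    (intervalIntegral.intervalIntegrable_of_integral_ne_zero
      (by rw [hKint]; exact one_ne_zero)).integrable_of_support_subset_Icc hKsupp
  refine ⟨fun t ht => abs_kernel_bias_le_first_moment hK hKnonneg hKsupp hf' hF₁ hΛ hh0 ht,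
    fun t ht => ?_⟩
  exact (abs_kernel_bias_le_second_moment hK hKnonneg hKsupp hKsymm hf' hf'' hF₁ hF₂ hlam' hΛ hL
    hh0 (by rwa [zero_add])).trans_eq (by ring)

/-- Kernel bias bounds: for a symmetric kernel `K` supported in `[-1,1]` with unit mass,
`f` twice differentiable with `|f'| ≤ F₁`, `|f''| ≤ F₂`, and `λ` differentiable with
`|λ| ≤ Λ`, `|λ'| ≤ L`, for `0 < h ≤ 1/2`:
(i) for every `t ∈ [0,1]`,
  `|∫₀¹ h⁻¹ K((u-t)/h)(f(u)-f(t))λ(u) du| ≤ F₁ Λ h ∫_{-1}^1 |w| K(w) dw`;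
(ii) for every `t ∈ [h, 1-h]`,
  `|∫₀¹ h⁻¹ K((u-t)/h)(f(u)-f(t))λ(u) du| ≤ ((1/2)F₂Λ + F₁L) h² ∫_{-1}^1 w² K(w) dw`. -/
theorem stmt_16 (K : ℝ → ℝ) (hKmeas : Measurable K) (hKnonneg : ∀ w, 0 ≤ K w)
    (hKsupp : Function.support K ⊆ Set.Icc (-1:ℝ) 1)
    (hKint : (∫ w in (-1:ℝ)..1, K w) = 1)
    (hKsymm : ∀ w, K (-w) = K w)
    (f f' f'' : ℝ → ℝ)
    (hf' : ∀ t ∈ Set.Icc (0:ℝ) 1, HasDerivWithinAt f (f' t) (Set.Icc (0:ℝ) 1) t)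
    (hf'' : ∀ t ∈ Set.Icc (0:ℝ) 1, HasDerivWithinAt f' (f'' t) (Set.Icc (0:ℝ) 1) t)
    (F₁ F₂ : ℝ)
    (hF₁ : ∀ t ∈ Set.Icc (0:ℝ) 1, |f' t| ≤ F₁)
    (hF₂ : ∀ t ∈ Set.Icc (0:ℝ) 1, |f'' t| ≤ F₂)
    (lam lam' : ℝ → ℝ)
    (hlam' : ∀ t ∈ Set.Icc (0:ℝ) 1, HasDerivWithinAt lam (lam' t) (Set.Icc (0:ℝ) 1) t)
    (Λ L : ℝ)
    (hΛ : ∀ t ∈ Set.Icc (0:ℝ) 1, |lam t| ≤ Λ)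
    (hL : ∀ t ∈ Set.Icc (0:ℝ) 1, |lam' t| ≤ L)
    (h : ℝ) (hh0 : 0 < h) (hh1 : h ≤ 1/2) :
    (∀ t ∈ Set.Icc (0:ℝ) 1,
      |∫ u in (0:ℝ)..1, h⁻¹ * K ((u - t) / h) * (f u - f t) * lam u|
        ≤ F₁ * Λ * h * ∫ w in (-1:ℝ)..1, |w| * K w) ∧
    (∀ t ∈ Set.Icc h (1 - h),
      |∫ u in (0:ℝ)..1, h⁻¹ * K ((u - t) / h) * (f u - f t) * lam u|
        ≤ ((1/2) * F₂ * Λ + F₁ * L) * h ^ 2 * ∫ w in (-1:ℝ)..1, w ^ 2 * K w) :=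
  stmt_16_general K hKnonneg hKsupp hKint hKsymm f f' f'' hf' hf'' F₁ F₂ hF₁ hF₂ lam lam' hlam' Λ L
    hΛ hL h hh0
end
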